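/- arXiv:1401.1330 — 6 statements merged into one kernel-verified Lean document; each statement's English description precedes it below -/
import Mathlib

section
/- Trading certificate for non-weightedness: let (v,N) be a simple game, S_1,…,S_p winning coalitions, L_1,…,L_q losing coalitions, and x∈ℝ_{≥0}^p, y∈ℝ_{≥0}^q with Σx_i = Σy_j > 0 such that for every agent a∈N, Σ_{i: a∈S_i} x_i ≤ Σ_{j: a∈L_j} y_j. Then (v,N) is not weighted. -/
/-!
Pair a weighting `w` of a weighted game with the certificate. Every winning `Sᵢ` has weight
at least the quota `Q`, and every losing `Lⱼ` has weight below it, so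
`Q ∑ xᵢ ≤ ∑ xᵢ w(Sᵢ) ≤ ∑ yⱼ w(Lⱼ) < Q ∑ yⱼ`, where the middle inequality is the agent-wise
cover condition after exchanging the order of summation, and the last one is strict because
some `yⱼ` is positive. This contradicts `∑ xᵢ = ∑ yⱼ`.
-/

def SimpleGame (n : ℕ) (W : Finset (Fin n) → Prop) : Prop :=
  ¬ W ∅ ∧ W Finset.univ ∧ ∀ ⦃S T : Finset (Fin n)⦄, S ⊆ T → W S → W T

def IsWeighted {n : ℕ} (W : Finset (Fin n) → Prop) : Prop :=
  ∃ q : ℝ, 0 < q ∧ ∃ w : Fin n → ℝ, (∀ i, 0 ≤ w i) ∧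
    ∀ S : Finset (Fin n), W S ↔ q ≤ ∑ i ∈ S, w i

open Finset

section WeightedSums

variable {ι κ α R : Type*} [Fintype ι] [Fintype κ] [Fintype α] [DecidableEq α]

theorem sum_mul_sum_eq_sum_mul_sum_filter_mem [CommSemiring R] (F : ι → Finset α)
    (c : ι → R) (w : α → R) :
    ∑ i, c i * ∑ a ∈ F i, w a = ∑ a, w a * ∑ i ∈ univ.filter (fun i => a ∈ F i), c i := by
  simp_rw [mul_sum]
  rw [sum_comm' (t' := univ) (s' := fun a => univ.filter (fun i => a ∈ F i)) (by simp)]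
  simp_rw [mul_comm]

theorem sum_mul_sum_le_of_forall_sum_filter_mem_le (S : ι → Finset α) (L : κ → Finset α)
    (x : ι → ℝ) (y : κ → ℝ) (w : α → ℝ) (hw : ∀ a, 0 ≤ w a)
    (hcover : ∀ a, ∑ i ∈ univ.filter (fun i => a ∈ S i), x i ≤
      ∑ j ∈ univ.filter (fun j => a ∈ L j), y j) :
    ∑ i, x i * ∑ a ∈ S i, w a ≤ ∑ j, y j * ∑ a ∈ L j, w a := by
  rw [sum_mul_sum_eq_sum_mul_sum_filter_mem S x w, sum_mul_sum_eq_sum_mul_sum_filter_mem L y w]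
  exact sum_le_sum fun a _ => mul_le_mul_of_nonneg_left (hcover a) (hw a)

end WeightedSums

section WeightedAverages

variable {ι : Type*} [Fintype ι] {x f : ι → ℝ} {Q : ℝ}

theorem mul_sum_le_sum_mul_of_le (hx : ∀ i, 0 ≤ x i) (hf : ∀ i, Q ≤ f i) :
    Q * ∑ i, x i ≤ ∑ i, x i * f i := by
  rw [mul_sum]
  exact sum_le_sum fun i _ => by rw [mul_comm]; exact mul_le_mul_of_nonneg_left (hf i) (hx i)

theorem sum_mul_lt_mul_sum_of_lt (hx : ∀ i, 0 ≤ x i) (hpos : 0 < ∑ i, x i)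
    (hf : ∀ i, f i < Q) :
    ∑ i, x i * f i < Q * ∑ i, x i := by
  obtain ⟨i₀, -, hi₀⟩ := exists_lt_of_sum_lt (f := fun _ => (0 : ℝ)) (by simpa using hpos)
  rw [mul_sum]
  refine sum_lt_sum (fun i _ => ?_) ⟨i₀, mem_univ i₀, ?_⟩
  · rw [mul_comm Q]; exact mul_le_mul_of_nonneg_left (hf i).le (hx i)
  · rw [mul_comm Q]; exact mul_lt_mul_of_pos_left (hf i₀) hi₀

end WeightedAverages

theorem trading_certificate_not_weighted_general {n p q : ℕ} (W : Finset (Fin n) → Prop)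
    (Sfam : Fin p → Finset (Fin n)) (Lfam : Fin q → Finset (Fin n))
    (hS : ∀ i, W (Sfam i)) (hL : ∀ j, ¬ W (Lfam j))
    (x : Fin p → ℝ) (y : Fin q → ℝ)
    (hx : ∀ i, 0 ≤ x i) (hy : ∀ j, 0 ≤ y j)
    (hsum : ∑ i, x i = ∑ j, y j) (hpos : 0 < ∑ i, x i)
    (hcover : ∀ a : Fin n,
      ∑ i ∈ Finset.univ.filter (fun i => a ∈ Sfam i), x i ≤
        ∑ j ∈ Finset.univ.filter (fun j => a ∈ Lfam j), y j) :
    ¬ IsWeighted W := by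
  rintro ⟨Q, -, w, hw, hwin_iff⟩
  have hwin : Q * ∑ i, x i ≤ ∑ i, x i * ∑ a ∈ Sfam i, w a :=
    mul_sum_le_sum_mul_of_le hx fun i => (hwin_iff _).1 (hS i)
  have hlose : ∑ j, y j * ∑ a ∈ Lfam j, w a < Q * ∑ j, y j :=
    sum_mul_lt_mul_sum_of_lt hy (hsum ▸ hpos) fun j => not_le.1 fun h => hL j ((hwin_iff _).2 h)
  have hpair := sum_mul_sum_le_of_forall_sum_filter_mem_le Sfam Lfam x y w hw hcover
  rw [hsum] at hwin
  linarith

/-- Trading certificate for non-weightedness. -/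
theorem trading_certificate_not_weighted {n p q : ℕ} (W : Finset (Fin n) → Prop)
    (hsg : SimpleGame n W)
    (Sfam : Fin p → Finset (Fin n)) (Lfam : Fin q → Finset (Fin n))
    (hS : ∀ i, W (Sfam i)) (hL : ∀ j, ¬ W (Lfam j))
    (x : Fin p → ℝ) (y : Fin q → ℝ)
    (hx : ∀ i, 0 ≤ x i) (hy : ∀ j, 0 ≤ y j)
    (hsum : ∑ i, x i = ∑ j, y j) (hpos : 0 < ∑ i, x i)
    (hcover : ∀ a : Fin n,
      ∑ i ∈ Finset.univ.filter (fun i => a ∈ Sfam i), x i ≤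
        ∑ j ∈ Finset.univ.filter (fun j => a ∈ Lfam j), y j) :
    ¬ IsWeighted W :=
  trading_certificate_not_weighted_general W Sfam Lfam hS hL x y hx hy hsum hpos hcover
end

section
/- Matrix form of the non-weightedness certificate: let (v,N) be a complete simple game with type composition (n_1,…,n_t), let S̃ be a p×t matrix whose rows are winning vectors and L̃ a q×t matrix whose rows are losing vectors. If there exist row vectors x∈ℝ_{≥0}^p, y∈ℝ_{≥0}^q with ‖x‖_1=‖y‖_1>0 and xS̃ ≤ yL̃ componentwise, then (v,N) is not weighted. -/
def Desir {n : ℕ} (W : Finset (Fin n) → Prop) (i j : Fin n) : Prop :=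
  ∀ S : Finset (Fin n), j ∈ S → i ∉ S → W S → W (insert i (S.erase j))

def DesirTotalPreorder {n : ℕ} (W : Finset (Fin n) → Prop) : Prop :=
  (∀ i, Desir W i i) ∧ (∀ i j, Desir W i j ∨ Desir W j i) ∧
    (∀ i j k, Desir W i j → Desir W j k → Desir W i k)

def IsDesirPartition {n t : ℕ} (W : Finset (Fin n) → Prop) (part : Fin n → Fin t) : Prop :=
  ∀ i j, (Desir W i j ∧ Desir W j i) ↔ part i = part j

def VecWinning {n t : ℕ} (W : Finset (Fin n) → Prop) (part : Fin n → Fin t)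
    (s : Fin t → ℕ) : Prop :=
  ∀ S : Finset (Fin n),
    (∀ c, (S.filter (fun i => part i = c)).card = s c) → W S

def VecLosing {n t : ℕ} (W : Finset (Fin n) → Prop) (part : Fin n → Fin t)
    (s : Fin t → ℕ) : Prop :=
  ∀ S : Finset (Fin n),
    (∀ c, (S.filter (fun i => part i = c)).card = s c) → ¬ W S

/-!
Suppose the game were weighted with quota `Q` and weights `w`, and give every class its mean weight
`ω c`. A winning vector is realised by the lightest players of each class, so every row `s` of `S̃`
has `Q ≤ s · ω`; a losing vector is realised by the heaviest ones, so every row `l` of `L̃` has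
`l · ω < Q`. Pairing with `ω ≥ 0` then gives
`Q ‖x‖₁ ≤ x S̃ ω ≤ y L̃ ω < Q ‖y‖₁ = Q ‖x‖₁`.
-/

open Finset Matrix

section Averaging

variable {α 𝕜 : Type*} [DecidableEq α]

theorem Finset.exists_lightest_subset {β : Type*} [LinearOrder β] (w : α → β) {k : ℕ}
    {F : Finset α} (hk : k ≤ #F) :
    ∃ T ⊆ F, #T = k ∧ ∀ a ∈ T, ∀ b ∈ F \ T, w a ≤ w b := by
  induction k with
  | zero => exact ⟨∅, empty_subset F, card_empty, by simp⟩
  | succ k ih =>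
    obtain ⟨T, hTF, hTk, hlight⟩ := ih (Nat.le_of_succ_le hk)
    have hrest : (F \ T).Nonempty := by
      rw [← card_pos, card_sdiff_of_subset hTF]
      omega
    obtain ⟨b, hb, hbmin⟩ := exists_min_image (F \ T) w hrest
    rw [mem_sdiff] at hb
    refine ⟨insert b T, insert_subset hb.1 hTF, by rw [card_insert_of_notMem hb.2, hTk], ?_⟩
    intro a ha c hc
    have hc' : c ∈ F \ T := sdiff_subset_sdiff_right F (subset_insert b T) hc
    rcases mem_insert.1 ha with rfl | ha
    · exact hbmin c hc'
    · exact hlight a ha c hc'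

variable [Field 𝕜] [LinearOrder 𝕜] [IsStrictOrderedRing 𝕜]

theorem Finset.card_mul_sum_le_of_forall_le {w : α → 𝕜} {F T : Finset α} (hTF : T ⊆ F)
    (hlight : ∀ a ∈ T, ∀ b ∈ F \ T, w a ≤ w b) :
    (#F : 𝕜) * ∑ a ∈ T, w a ≤ #T * ∑ a ∈ F, w a := by
  have hcard : (#F : 𝕜) = #T + #(F \ T) := by
    rw [card_sdiff_of_subset hTF, Nat.cast_sub (card_le_card hTF)]
    ring
  have hcross : (#(F \ T) : 𝕜) * ∑ a ∈ T, w a ≤ #T * ∑ b ∈ F \ T, w b := by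
    simpa only [sum_const, nsmul_eq_mul, mul_sum, sum_mul, mul_comm, sum_comm (s := T)] using
      sum_le_sum fun a ha => sum_le_sum fun b hb => hlight a ha b hb
  rw [hcard, ← sum_sdiff hTF]
  linarith

theorem Finset.exists_subset_card_eq_sum_le_mean (w : α → 𝕜) {k : ℕ} {F : Finset α}
    (hk : k ≤ #F) : ∃ T ⊆ F, #T = k ∧ ∑ a ∈ T, w a ≤ k * ((∑ a ∈ F, w a) / #F) := by
  obtain ⟨T, hTF, rfl, hlight⟩ := exists_lightest_subset w hk
  refine ⟨T, hTF, rfl, ?_⟩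
  rcases (#F).eq_zero_or_pos with hF | hF
  · obtain rfl := Finset.card_eq_zero.1 hF
    obtain rfl := subset_empty.1 hTF
    simp
  rw [mul_div_assoc', le_div_iff₀ (by exact_mod_cast hF), mul_comm]
  exact card_mul_sum_le_of_forall_le hTF hlight

theorem Finset.exists_subset_card_eq_mean_le_sum (w : α → 𝕜) {k : ℕ} {F : Finset α}
    (hk : k ≤ #F) : ∃ T ⊆ F, #T = k ∧ k * ((∑ a ∈ F, w a) / #F) ≤ ∑ a ∈ T, w a := by
  obtain ⟨T, hTF, hTk, hT⟩ := exists_subset_card_eq_sum_le_mean (-w) hk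
  refine ⟨T, hTF, hTk, ?_⟩
  simpa only [Pi.neg_apply, sum_neg_distrib, neg_div, mul_neg, neg_le_neg_iff] using hT

end Averaging

theorem Matrix.not_vecMul_le_of_separating {ι κ γ : Type*} [Fintype ι] [Fintype κ] [Fintype γ]
    (S : Matrix ι γ ℝ) (L : Matrix κ γ ℝ) (ω : γ → ℝ) (hω : 0 ≤ ω) (Q : ℝ)
    (hS : ∀ i, Q ≤ (S *ᵥ ω) i) (hL : ∀ j, (L *ᵥ ω) j < Q) (x : ι → ℝ) (y : κ → ℝ)
    (hx : 0 ≤ x) (hy : 0 ≤ y) (hsum : ∑ i, x i = ∑ j, y j) (hpos : 0 < ∑ j, y j) :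
    ¬ x ᵥ* S ≤ y ᵥ* L := by
  intro hcert
  obtain ⟨j₀, -, hj₀⟩ :=
    exists_lt_of_sum_lt (s := univ) (f := fun _ => (0 : ℝ)) (by simpa using hpos)
  have hwin : Q * ∑ i, x i ≤ x ⬝ᵥ (S *ᵥ ω) := by
    rw [mul_sum]
    exact sum_le_sum fun i _ => by rw [mul_comm]; exact mul_le_mul_of_nonneg_left (hS i) (hx i)
  have hlose : y ⬝ᵥ (L *ᵥ ω) < Q * ∑ j, y j := by
    rw [mul_sum]
    refine sum_lt_sum (fun j _ => ?_) ⟨j₀, mem_univ _, ?_⟩ <;> rw [mul_comm Q]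
    · exact mul_le_mul_of_nonneg_left (hL j).le (hy j)
    · exact mul_lt_mul_of_pos_left (hL j₀) hj₀
  have hpair : (x ᵥ* S) ⬝ᵥ ω ≤ (y ᵥ* L) ⬝ᵥ ω :=
    sum_le_sum fun c _ => mul_le_mul_of_nonneg_right (hcert c) (hω c)
  refine lt_irrefl (Q * ∑ j, y j) ?_
  calc Q * ∑ j, y j = Q * ∑ i, x i := by rw [hsum]
    _ ≤ x ⬝ᵥ (S *ᵥ ω) := hwin
    _ = (x ᵥ* S) ⬝ᵥ ω := dotProduct_mulVec x S ω
    _ ≤ (y ᵥ* L) ⬝ᵥ ω := hpair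
    _ = y ⬝ᵥ (L *ᵥ ω) := (dotProduct_mulVec y L ω).symm
    _ < Q * ∑ j, y j := hlose

section Coalitions

variable {α γ : Type*} [Fintype α] [DecidableEq γ]

noncomputable def classMeanWeight (part : α → γ) (w : α → ℝ) (c : γ) : ℝ :=
  (∑ a ∈ univ.filter (part · = c), w a) / #(univ.filter (part · = c))

theorem classMeanWeight_nonneg (part : α → γ) {w : α → ℝ} (hw : ∀ a, 0 ≤ w a) :
    0 ≤ classMeanWeight part w :=
  fun _ => div_nonneg (sum_nonneg fun a _ => hw a) (Nat.cast_nonneg _)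

variable [DecidableEq α]

theorem exists_coalition_of_subset_fiber (part : α → γ) (T : γ → Finset α)
    (hT : ∀ c, T c ⊆ univ.filter (part · = c)) :
    ∃ S : Finset α, ∀ c, S.filter (part · = c) = T c := by
  refine ⟨univ.filter fun a => a ∈ T (part a), fun c => ?_⟩
  ext a
  simp only [mem_filter, mem_univ, true_and]
  constructor
  · rintro ⟨ha, rfl⟩
    exact ha
  · intro ha
    have hac : part a = c := (mem_filter.1 (hT c ha)).2
    exact ⟨hac ▸ ha, hac⟩

variable [Fintype γ]

theorem exists_coalition_card_fiber_sum_le (part : α → γ) (w : α → ℝ) {s : γ → ℕ}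
    (hs : ∀ c, s c ≤ #(univ.filter (part · = c))) :
    ∃ S : Finset α, (∀ c, #(S.filter (part · = c)) = s c) ∧
      ∑ a ∈ S, w a ≤ ∑ c, s c * classMeanWeight part w c := by
  choose T hTsub hTcard hTsum using fun c => exists_subset_card_eq_sum_le_mean w (hs c)
  obtain ⟨S, hS⟩ := exists_coalition_of_subset_fiber part T hTsub
  refine ⟨S, fun c => hS c ▸ hTcard c, ?_⟩
  rw [← sum_fiberwise S part w]
  simp only [hS]
  exact sum_le_sum fun c _ => hTsum c

theorem exists_coalition_card_fiber_le_sum (part : α → γ) (w : α → ℝ) {s : γ → ℕ}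
    (hs : ∀ c, s c ≤ #(univ.filter (part · = c))) :
    ∃ S : Finset α, (∀ c, #(S.filter (part · = c)) = s c) ∧
      ∑ c, s c * classMeanWeight part w c ≤ ∑ a ∈ S, w a := by
  choose T hTsub hTcard hTsum using fun c => exists_subset_card_eq_mean_le_sum w (hs c)
  obtain ⟨S, hS⟩ := exists_coalition_of_subset_fiber part T hTsub
  refine ⟨S, fun c => hS c ▸ hTcard c, ?_⟩
  rw [← sum_fiberwise S part w]
  simp only [hS]
  exact sum_le_sum fun c _ => hTsum c

end Coalitions

section WeightedGame

variable {n t : ℕ} {W : Finset (Fin n) → Prop} {part : Fin n → Fin t} {s : Fin t → ℕ}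
  {Q : ℝ} {w : Fin n → ℝ}

theorem VecWinning.le_sum_classMeanWeight (hrep : ∀ S, W S ↔ Q ≤ ∑ a ∈ S, w a)
    (hwin : VecWinning W part s) (hs : ∀ c, s c ≤ #(univ.filter (part · = c))) :
    Q ≤ ∑ c, s c * classMeanWeight part w c := by
  obtain ⟨S, hSs, hSw⟩ := exists_coalition_card_fiber_sum_le part w hs
  exact ((hrep S).1 (hwin S hSs)).trans hSw

theorem VecLosing.sum_classMeanWeight_lt (hrep : ∀ S, W S ↔ Q ≤ ∑ a ∈ S, w a)
    (hlose : VecLosing W part s) (hs : ∀ c, s c ≤ #(univ.filter (part · = c))) :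
    ∑ c, s c * classMeanWeight part w c < Q := by
  obtain ⟨S, hSs, hSw⟩ := exists_coalition_card_fiber_le_sum part w hs
  exact hSw.trans_lt (not_le.1 fun h => hlose S hSs ((hrep S).2 h))

end WeightedGame

theorem matrix_certificate_not_weighted_general {n t p q : ℕ} (W : Finset (Fin n) → Prop)
    (part : Fin n → Fin t)
    (Smat : Fin p → Fin t → ℕ) (Lmat : Fin q → Fin t → ℕ)
    (hSb : ∀ i c, Smat i c ≤ (Finset.univ.filter (fun a => part a = c)).card)
    (hLb : ∀ j c, Lmat j c ≤ (Finset.univ.filter (fun a => part a = c)).card)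
    (hS : ∀ i, VecWinning W part (Smat i)) (hL : ∀ j, VecLosing W part (Lmat j))
    (x : Fin p → ℝ) (y : Fin q → ℝ)
    (hx : ∀ i, 0 ≤ x i) (hy : ∀ j, 0 ≤ y j)
    (hsum : ∑ i, x i = ∑ j, y j) (hpos : 0 < ∑ i, x i)
    (hcert : ∀ c : Fin t, ∑ i, x i * (Smat i c : ℝ) ≤ ∑ j, y j * (Lmat j c : ℝ)) :
    ¬ IsWeighted W := by
  rintro ⟨Q, -, w, hw, hrep⟩
  exact not_vecMul_le_of_separating (of fun i c => (Smat i c : ℝ))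
    (of fun j c => (Lmat j c : ℝ)) (classMeanWeight part w) (classMeanWeight_nonneg part hw) Q
    (fun i => (hS i).le_sum_classMeanWeight hrep (hSb i))
    (fun j => (hL j).sum_classMeanWeight_lt hrep (hLb j))
    x y hx hy hsum (hsum ▸ hpos) hcert

/-- Matrix form of the non-weightedness certificate: if `x·S̃ ≤ y·L̃` with
`‖x‖₁ = ‖y‖₁ > 0`, the complete simple game is not weighted. -/
theorem matrix_certificate_not_weighted {n t p q : ℕ} (W : Finset (Fin n) → Prop)
    (part : Fin n → Fin t) (hsg : SimpleGame n W) (hc : DesirTotalPreorder W)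
    (hpart : IsDesirPartition W part)
    (Smat : Fin p → Fin t → ℕ) (Lmat : Fin q → Fin t → ℕ)
    (hSb : ∀ i c, Smat i c ≤ (Finset.univ.filter (fun a => part a = c)).card)
    (hLb : ∀ j c, Lmat j c ≤ (Finset.univ.filter (fun a => part a = c)).card)
    (hS : ∀ i, VecWinning W part (Smat i)) (hL : ∀ j, VecLosing W part (Lmat j))
    (x : Fin p → ℝ) (y : Fin q → ℝ)
    (hx : ∀ i, 0 ≤ x i) (hy : ∀ j, 0 ≤ y j)
    (hsum : ∑ i, x i = ∑ j, y j) (hpos : 0 < ∑ i, x i)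
    (hcert : ∀ c : Fin t, ∑ i, x i * (Smat i c : ℝ) ≤ ∑ j, y j * (Lmat j c : ℝ)) :
    ¬ IsWeighted W :=
  matrix_certificate_not_weighted_general W part Smat Lmat hSb hLb hS hL x y hx hy hsum hpos hcert
end

section
/- The simple game on 6 agents {1,…,6}, defined by: a coalition S⊆{1,2,3,4,5,6} is winning iff S contains one of {1,2}, {1,3,6}, {1,4,5}, {2,3,4}, {3,4,5,6}, is a simple game that is not weighted. -/
/-- The 6-agent game (agents `0,…,5` standing for `1,…,6`) with minimal winning
coalitions `{1,2},{1,3,6},{1,4,5},{2,3,4},{3,4,5,6}` is a simple game that is not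
weighted. -/
theorem six_agent_game_not_weighted
    (W : Finset (Fin 6) → Prop)
    (hW : ∀ S : Finset (Fin 6), W S ↔
      (({0, 1} : Finset (Fin 6)) ⊆ S ∨ ({0, 2, 5} : Finset (Fin 6)) ⊆ S ∨
        ({0, 3, 4} : Finset (Fin 6)) ⊆ S ∨ ({1, 2, 3} : Finset (Fin 6)) ⊆ S ∨
        ({2, 3, 4, 5} : Finset (Fin 6)) ⊆ S)) :
    SimpleGame 6 W ∧ ¬ IsWeighted W := by
  constructor
  · refine ⟨?_, ?_, ?_⟩
    · intro h
      exact absurd ((hW _).1 h) (by decide)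
    · exact (hW _).2 (Or.inl (by decide))
    · intro S T hST h
      rcases (hW S).1 h with h | h | h | h | h <;>
        exact (hW T).2 (by first
          | exact Or.inl (h.trans hST)
          | exact Or.inr (Or.inl (h.trans hST))
          | exact Or.inr (Or.inr (Or.inl (h.trans hST)))
          | exact Or.inr (Or.inr (Or.inr (Or.inl (h.trans hST))))
          | exact Or.inr (Or.inr (Or.inr (Or.inr (h.trans hST)))))
  · rintro ⟨q, hq, w, hw, hiff⟩
    have hA : q ≤ ∑ i ∈ ({0, 3, 4} : Finset (Fin 6)), w i :=
      (hiff _).1 ((hW _).2 (Or.inr (Or.inr (Or.inl (by decide)))))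
    have hB : q ≤ ∑ i ∈ ({1, 2, 3} : Finset (Fin 6)), w i :=
      (hiff _).1 ((hW _).2 (Or.inr (Or.inr (Or.inr (Or.inl (by decide))))))
    have hC : ¬ q ≤ ∑ i ∈ ({0, 2, 3} : Finset (Fin 6)), w i := by
      intro h
      exact absurd ((hW _).1 ((hiff _).2 h)) (by decide)
    have hD : ¬ q ≤ ∑ i ∈ ({1, 3, 4} : Finset (Fin 6)), w i := by
      intro h
      exact absurd ((hW _).1 ((hiff _).2 h)) (by decide)
    push_neg at hC hD
    have e1 : ∑ i ∈ ({0, 3, 4} : Finset (Fin 6)), w i = w 0 + w 3 + w 4 := by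
      simp [Finset.sum_insert, Finset.mem_insert]; ring
    have e2 : ∑ i ∈ ({1, 2, 3} : Finset (Fin 6)), w i = w 1 + w 2 + w 3 := by
      simp [Finset.sum_insert, Finset.mem_insert]; ring
    have e3 : ∑ i ∈ ({0, 2, 3} : Finset (Fin 6)), w i = w 0 + w 2 + w 3 := by
      simp [Finset.sum_insert, Finset.mem_insert]; ring
    have e4 : ∑ i ∈ ({1, 3, 4} : Finset (Fin 6)), w i = w 1 + w 3 + w 4 := by
      simp [Finset.sum_insert, Finset.mem_insert]; ring
    rw [e1] at hA; rw [e2] at hB; rw [e3] at hC; rw [e4] at hD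
    linarith
end

section
/- For every t ≥ 6 and every (n_1,…,n_t)∈ℕ_{>0}^t, there exists a complete simple game with exactly t desirability equivalence classes of sizes n_1,…,n_t that is not weighted. -/
/-- Classes are ordered decreasingly by desirability. -/
def OrderedPartition {n t : ℕ} (W : Finset (Fin n) → Prop) (part : Fin n → Fin t) : Prop :=
  ∀ i j, part i ≤ part j → Desir W i j

namespace CSGAux

open Finset

/-- Desirability is always transitive. -/
lemma desir_trans {n : ℕ} (W : Finset (Fin n) → Prop) (i j k : Fin n)
    (hij : Desir W i j) (hjk : Desir W j k) : Desir W i k := by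
  intro S hkS hiS hWS
  by_cases hik : i = k
  · exact absurd (hik ▸ hkS) hiS
  by_cases hij' : i = j
  · exact hij' ▸ hjk S hkS (hij' ▸ hiS) hWS
  by_cases hjk' : j = k
  · subst hjk'
    exact hij S hkS hiS hWS
  by_cases hjS : j ∈ S
  · have h1 : W (insert i (S.erase j)) := hij S hjS hiS hWS
    have hkT : k ∈ insert i (S.erase j) := by
      simp only [Finset.mem_insert, Finset.mem_erase]
      exact Or.inr ⟨fun h => hjk' h.symm, hkS⟩
    have hjT : j ∉ insert i (S.erase j) := by
      simp only [Finset.mem_insert, Finset.mem_erase]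
      rintro (h | ⟨h, _⟩) <;> simp_all
    have h2 := hjk _ hkT hjT h1
    have heq : insert j ((insert i (S.erase j)).erase k) = insert i (S.erase k) := by
      ext a
      simp only [Finset.mem_insert, Finset.mem_erase]
      by_cases h1 : a = i <;> by_cases h2 : a = j <;> by_cases h3 : a = k <;> simp_all
    rwa [heq] at h2
  · have h1 : W (insert j (S.erase k)) := hjk S hkS hjS hWS
    have hjT : j ∈ insert j (S.erase k) := Finset.mem_insert_self _ _
    have hiT : i ∉ insert j (S.erase k) := by
      simp only [Finset.mem_insert, Finset.mem_erase]
      rintro (h | ⟨_, h⟩) <;> simp_all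
    have h2 := hij _ hjT hiT h1
    rwa [Finset.erase_insert (by simp [Finset.mem_erase, hjS])] at h2

/-- weighted sum of a count vector -/
def Us (t : ℕ) (u x : ℕ → ℕ) : ℕ := ∑ c ∈ Finset.range t, u c * x c

def shiftVec (c : ℕ) (y : ℕ → ℕ) : ℕ → ℕ :=
  fun d => if d = c then 0 else if d = c + 1 then 1 else y d

def ind (L : List ℕ) : ℕ → ℕ := fun d => if d ∈ L then 1 else 0

lemma Us_ind (t : ℕ) (u : ℕ → ℕ) (L : List ℕ) (hL : L.Nodup) (hLt : ∀ x ∈ L, x < t) :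
    Us t u (ind L) = (L.map u).sum := by
  unfold Us ind
  rw [← List.sum_toFinset u hL]
  have h1 : ∀ c ∈ Finset.range t, u c * (if c ∈ L then 1 else 0)
      = if c ∈ L.toFinset then u c else 0 := by
    intro c _
    by_cases h : c ∈ L <;> simp [h]
  rw [Finset.sum_congr rfl h1, Finset.sum_ite_mem]
  congr 1
  ext c
  simp only [Finset.mem_inter, Finset.mem_range, List.mem_toFinset]
  exact ⟨fun h => h.2, fun h => ⟨hLt c h, h⟩⟩

lemma ind_le_one (L : List ℕ) (d : ℕ) : ind L d ≤ 1 := by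
  unfold ind; split <;> omega

lemma ind_eq_one {L : List ℕ} {d : ℕ} (h : d ∈ L) : ind L d = 1 := by simp [ind, h]

lemma ind_eq_zero {L : List ℕ} {d : ℕ} (h : d ∉ L) : ind L d = 0 := by simp [ind, h]

lemma Us_shift (t : ℕ) (u : ℕ → ℕ) (c : ℕ) (y : ℕ → ℕ) (hc1 : c + 1 < t)
    (hyc : y c = 1) (hyc1 : y (c + 1) = 0) :
    Us t u (shiftVec c y) + u c = Us t u y + u (c + 1) := by
  have hcm : c ∈ Finset.range t := by simp; omega
  have hcm1 : c + 1 ∈ (Finset.range t).erase c := by simp; omega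
  unfold Us
  rw [← Finset.add_sum_erase _ _ hcm, ← Finset.add_sum_erase _ _ hcm1]
  conv_rhs => rw [← Finset.add_sum_erase _ (fun d => u d * y d) hcm,
    ← Finset.add_sum_erase _ (fun d => u d * y d) hcm1]
  have hR : ∑ d ∈ ((Finset.range t).erase c).erase (c + 1), u d * shiftVec c y d
      = ∑ d ∈ ((Finset.range t).erase c).erase (c + 1), u d * y d := by
    refine Finset.sum_congr rfl fun d hd => ?_
    simp only [Finset.mem_erase] at hd
    simp [shiftVec, hd.1, hd.2.1]
  rw [hR]
  have h1 : shiftVec c y c = 0 := by simp [shiftVec]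
  have h2 : shiftVec c y (c + 1) = 1 := by simp [shiftVec]
  rw [h1, h2, hyc, hyc1]
  ring

structure GameData (t : ℕ) where
  u : ℕ → ℕ
  q : ℕ
  A : ℕ → ℕ
  B : ℕ → ℕ
  C : ℕ → ℕ
  D : ℕ → ℕ
  wit : ℕ → ℕ → ℕ
  hu : ∀ c, c + 1 < t → u (c + 1) < u c
  hupos : ∀ c, c < t → 0 < u c
  hq : 0 < q
  husum : q < ∑ c ∈ Finset.range t, u c
  hA1 : ∀ c, A c ≤ 1
  hB1 : ∀ c, B c ≤ 1
  hC1 : ∀ c, C c ≤ 1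
  hD1 : ∀ c, D c ≤ 1
  hA0 : ∀ c, t ≤ c → A c = 0
  hB0 : ∀ c, t ≤ c → B c = 0
  hC0 : ∀ c, t ≤ c → C c = 0
  hD0 : ∀ c, t ≤ c → D c = 0
  hAq : Us t u A = q
  hBq : Us t u B = q
  hCq : Us t u C = q
  hDq : Us t u D = q
  hsum : ∀ c, A c + B c = C c + D c
  hCA : C ≠ A
  hCB : C ≠ B
  hDA : D ≠ A
  hDB : D ≠ B
  hw1 : ∀ c, c + 1 < t → ∀ d, wit c d ≤ 1
  hw0 : ∀ c, c + 1 < t → ∀ d, t ≤ d → wit c d = 0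
  hwc : ∀ c, c + 1 < t → wit c c = 1
  hwc1 : ∀ c, c + 1 < t → wit c (c + 1) = 0
  hwin : ∀ c, c + 1 < t →
    q < Us t u (wit c) ∨ (Us t u (wit c) = q ∧ (wit c = A ∨ wit c = B))
  hlose : ∀ c, c + 1 < t →
    Us t u (shiftVec c (wit c)) < q ∨
      (Us t u (shiftVec c (wit c)) = q ∧ shiftVec c (wit c) ≠ A ∧ shiftVec c (wit c) ≠ B)

lemma u_strict_anti {t : ℕ} (gd : GameData t) :
    ∀ a b, a < b → b < t → gd.u b < gd.u a := by
  have key : ∀ k a, a + k + 1 < t → gd.u (a + k + 1) < gd.u a := by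
    intro k
    induction k with
    | zero => intro a ha; exact gd.hu a ha
    | succ m ih =>
      intro a ha
      have h1 : gd.u (a + m + 1 + 1) < gd.u (a + m + 1) := gd.hu _ (by omega)
      have h2 : gd.u (a + m + 1) < gd.u a := ih a (by omega)
      calc gd.u (a + (m+1) + 1) = gd.u (a + m + 1 + 1) := by ring_nf
        _ < gd.u a := lt_trans h1 h2
  intro a b hab hbt
  have : b = a + (b - a - 1) + 1 := by omega
  rw [this]
  exact key _ _ (by omega)

section Main

variable {t N : ℕ} {nvec : Fin t → ℕ}

def prt (e : Fin N ≃ Σ c : Fin t, Fin (nvec c)) (a : Fin N) : Fin t := (e a).1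

def cnt (e : Fin N ≃ Σ c : Fin t, Fin (nvec c)) (S : Finset (Fin N)) (d : ℕ) : ℕ :=
  (S.filter (fun a => ((prt e a : ℕ) = d))).card

def Wg (gd : GameData t) (e : Fin N ≃ Σ c : Fin t, Fin (nvec c)) (S : Finset (Fin N)) : Prop :=
  gd.q < Us t gd.u (cnt e S) ∨
    (Us t gd.u (cnt e S) = gd.q ∧ (cnt e S = gd.A ∨ cnt e S = gd.B))

variable (e : Fin N ≃ Σ c : Fin t, Fin (nvec c)) (gd : GameData t)

lemma cnt_mono {S T : Finset (Fin N)} (h : S ⊆ T) (d : ℕ) : cnt e S d ≤ cnt e T d :=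
  Finset.card_le_card (Finset.filter_subset_filter _ h)

lemma cnt_ge {S : Finset (Fin N)} {d : ℕ} (h : t ≤ d) : cnt e S d = 0 := by
  unfold cnt
  rw [Finset.card_eq_zero, Finset.filter_eq_empty_iff]
  intro a _
  have := (prt e a).2
  omega

lemma Us_mono {u x y : ℕ → ℕ} (h : ∀ d, x d ≤ y d) : Us t u x ≤ Us t u y :=
  Finset.sum_le_sum fun c _ => Nat.mul_le_mul_left _ (h c)

lemma Us_add_ind {u : ℕ → ℕ} {p : ℕ} (hp : p < t) (x : ℕ → ℕ) :
    Us t u (fun d => x d + if d = p then 1 else 0) = Us t u x + u p := by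
  unfold Us
  have : ∀ c ∈ Finset.range t, u c * (x c + if c = p then 1 else 0)
      = u c * x c + (if c = p then u c else 0) := by
    intro c _
    by_cases h : c = p <;> simp [h] <;> ring
  rw [Finset.sum_congr rfl this, Finset.sum_add_distrib, Finset.sum_ite_eq']
  simp [hp]

lemma cnt_insert {S : Finset (Fin N)} {i : Fin N} (h : i ∉ S) (d : ℕ) :
    cnt e (insert i S) d = cnt e S d + if d = (prt e i : ℕ) then 1 else 0 := by
  unfold cnt
  rw [Finset.filter_insert]
  by_cases hd : ((prt e i : ℕ) = d)
  · rw [if_pos hd, Finset.card_insert_of_notMem (fun hm => h (Finset.mem_filter.1 hm).1),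
      if_pos hd.symm]
  · rw [if_neg hd, if_neg (fun hh => hd hh.symm), add_zero]

lemma cnt_eq_erase {S : Finset (Fin N)} {j : Fin N} (h : j ∈ S) (d : ℕ) :
    cnt e S d = cnt e (S.erase j) d + if d = (prt e j : ℕ) then 1 else 0 := by
  conv_lhs => rw [← Finset.insert_erase h]
  exact cnt_insert e (Finset.notMem_erase _ _) d

lemma cnt_swap {S : Finset (Fin N)} {i j : Fin N} (hj : j ∈ S) (hi : i ∉ S) (d : ℕ) :
    cnt e (insert i (S.erase j)) d + (if d = (prt e j : ℕ) then 1 else 0)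
      = cnt e S d + (if d = (prt e i : ℕ) then 1 else 0) := by
  rw [cnt_insert e (fun h => hi (Finset.mem_of_mem_erase h)) d, cnt_eq_erase e hj d]
  ring

lemma cnt_swap_eq {S : Finset (Fin N)} {i j : Fin N} (hj : j ∈ S) (hi : i ∉ S)
    (hp : prt e i = prt e j) : cnt e (insert i (S.erase j)) = cnt e S := by
  funext d
  have := cnt_swap e hj hi d
  rw [hp] at this
  omega

lemma Us_cnt_swap {S : Finset (Fin N)} {i j : Fin N} (hj : j ∈ S) (hi : i ∉ S) :
    Us t gd.u (cnt e (insert i (S.erase j))) + gd.u (prt e j : ℕ)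
      = Us t gd.u (cnt e S) + gd.u (prt e i : ℕ) := by
  have h1 := Us_add_ind (u := gd.u) (prt e j).2 (cnt e (insert i (S.erase j)))
  have h2 := Us_add_ind (u := gd.u) (prt e i).2 (cnt e S)
  rw [← h1, ← h2]
  congr 1
  funext d
  exact cnt_swap e hj hi d

lemma cnt_eq_of_Us_eq {S T : Finset (Fin N)} (hST : S ⊆ T)
    (h : Us t gd.u (cnt e T) = Us t gd.u (cnt e S)) : cnt e T = cnt e S := by
  funext d
  rcases lt_or_ge d t with hd | hd
  · by_contra hne
    have hlt : cnt e S d < cnt e T d :=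
      lt_of_le_of_ne (cnt_mono e hST d) (fun hh => hne hh.symm)
    have : Us t gd.u (cnt e S) < Us t gd.u (cnt e T) := by
      apply Finset.sum_lt_sum (fun c _ => Nat.mul_le_mul_left _ (cnt_mono e hST c))
      exact ⟨d, Finset.mem_range.2 hd, (Nat.mul_lt_mul_left (gd.hupos d hd)).2 hlt⟩
    omega
  · rw [cnt_ge e hd, cnt_ge e hd]

lemma Wg_mono {S T : Finset (Fin N)} (hST : S ⊆ T) (hW : Wg gd e S) : Wg gd e T := by
  have hle : Us t gd.u (cnt e S) ≤ Us t gd.u (cnt e T) :=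
    Us_mono (cnt_mono e hST)
  rcases hW with h | ⟨h1, h2⟩
  · exact Or.inl (lt_of_lt_of_le h hle)
  · by_cases h3 : Us t gd.u (cnt e T) = gd.q
    · have := cnt_eq_of_Us_eq e gd hST (by omega)
      exact Or.inr ⟨h3, this ▸ h2⟩
    · exact Or.inl (by omega)

lemma Wg_empty : ¬ Wg gd e ∅ := by
  have h0 : ∀ d, cnt e (∅ : Finset (Fin N)) d = 0 := by
    intro d; simp [cnt]
  have : Us t gd.u (cnt e ∅) = 0 := by
    unfold Us; refine Finset.sum_eq_zero fun c _ => by rw [h0]; ring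
  intro h
  rcases h with h | ⟨h1, _⟩ <;> [skip; skip] <;> have := gd.hq <;> omega

def reps (hpos : ∀ c, 0 < nvec c) (e : Fin N ≃ Σ c : Fin t, Fin (nvec c)) (c : Fin t) : Fin N :=
  e.symm ⟨c, ⟨0, hpos c⟩⟩

lemma prt_reps (hpos : ∀ c, 0 < nvec c) (c : Fin t) : prt e (reps hpos e c) = c := by
  simp [prt, reps]

lemma Wg_univ (hpos : ∀ c, 0 < nvec c) : Wg gd e Finset.univ := by
  left
  have h1 : ∀ c ∈ Finset.range t, gd.u c ≤ gd.u c * cnt e Finset.univ c := by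
    intro c hc
    rcases Finset.mem_range.1 hc with hc'
    have : 0 < cnt e Finset.univ c := by
      unfold cnt
      rw [Finset.card_pos]
      exact ⟨reps hpos e ⟨c, hc'⟩, Finset.mem_filter.2 ⟨Finset.mem_univ _,
        by rw [prt_reps]⟩⟩
    calc gd.u c = gd.u c * 1 := (mul_one _).symm
      _ ≤ gd.u c * cnt e Finset.univ c := Nat.mul_le_mul_left _ this
  calc gd.q < ∑ c ∈ Finset.range t, gd.u c := gd.husum
    _ ≤ Us t gd.u (cnt e Finset.univ) := Finset.sum_le_sum h1

lemma desir_le {i j : Fin N} (h : prt e i ≤ prt e j) : Desir (Wg gd e) i j := by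
  intro S hjS hiS hWS
  rcases eq_or_lt_of_le h with heq | hlt
  · have hc := cnt_swap_eq e hjS hiS heq
    unfold Wg
    rw [hc]
    exact hWS
  · have hu : gd.u (prt e j : ℕ) < gd.u (prt e i : ℕ) :=
      u_strict_anti gd _ _ (by exact_mod_cast hlt) (prt e j).2
    have hswap := Us_cnt_swap e gd hjS hiS
    have hq_le : gd.q ≤ Us t gd.u (cnt e S) := by
      rcases hWS with h | ⟨h, _⟩ <;> omega
    left
    omega

def real01 (hpos : ∀ c, 0 < nvec c) (y : ℕ → ℕ) : Finset (Fin N) :=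
  (Finset.univ.filter (fun c : Fin t => y (c : ℕ) = 1)).image (reps hpos e)

lemma reps_inj (hpos : ∀ c, 0 < nvec c) : Function.Injective (reps (nvec := nvec) hpos e) := by
  intro a b h
  have := congrArg (prt e) h
  rwa [prt_reps, prt_reps] at this

lemma mem_real01 (hpos : ∀ c, 0 < nvec c) {y : ℕ → ℕ} {c : Fin t} :
    reps hpos e c ∈ real01 e hpos y ↔ y (c : ℕ) = 1 := by
  unfold real01
  rw [Finset.mem_image]
  constructor
  · rintro ⟨c', hc', heq⟩
    have := reps_inj e hpos heq
    subst this
    exact (Finset.mem_filter.1 hc').2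
  · intro h
    exact ⟨c, Finset.mem_filter.2 ⟨Finset.mem_univ _, h⟩, rfl⟩

lemma cnt_real01 (hpos : ∀ c, 0 < nvec c) {y : ℕ → ℕ} (hy1 : ∀ d, y d ≤ 1) (hy0 : ∀ d, t ≤ d → y d = 0) :
    cnt e (real01 e hpos y) = y := by
  funext d
  rcases lt_or_ge d t with hd | hd
  · set dF : Fin t := ⟨d, hd⟩ with hdF
    by_cases hyd : y d = 1
    · have : (real01 e hpos y).filter (fun a => ((prt e a : ℕ) = d)) = {reps hpos e dF} := by
        ext a
        simp only [Finset.mem_filter, Finset.mem_singleton, real01, Finset.mem_image]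
        constructor
        · rintro ⟨⟨c', hc', rfl⟩, hpa⟩
          rw [prt_reps] at hpa
          congr 1
          exact Fin.ext hpa
        · rintro rfl
          exact ⟨⟨dF, ⟨Finset.mem_univ dF, hyd⟩, rfl⟩, by rw [prt_reps]⟩
      unfold cnt
      rw [this, Finset.card_singleton, hyd]
    · have hyd0 : y d = 0 := by have := hy1 d; omega
      have : (real01 e hpos y).filter (fun a => ((prt e a : ℕ) = d)) = ∅ := by
        rw [Finset.filter_eq_empty_iff]
        rintro a ha
        simp only [real01, Finset.mem_image] at ha
        obtain ⟨c', hc', rfl⟩ := ha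
        rw [prt_reps]
        intro hcd
        have := (Finset.mem_filter.1 hc').2
        rw [hcd] at this
        omega
      unfold cnt
      rw [this, Finset.card_empty, hyd0]
  · rw [cnt_ge e hd, hy0 d hd]

lemma not_desir_consec (hpos : ∀ c, 0 < nvec c) {c : ℕ} (hc : c + 1 < t) :
    ¬ Desir (Wg gd e) (reps hpos e ⟨c + 1, hc⟩) (reps hpos e ⟨c, by omega⟩) := by
  intro hdes
  have hy1 := gd.hw1 c hc
  have hy0 := gd.hw0 c hc
  have hyc := gd.hwc c hc
  have hyc1 := gd.hwc1 c hc
  let y := gd.wit c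
  let S := real01 e hpos (gd.wit c)
  have hcnt : cnt e S = gd.wit c := cnt_real01 e hpos hy1 hy0
  have hjS : reps hpos e ⟨c, by omega⟩ ∈ S := (mem_real01 e hpos).2 hyc
  have hiS : reps hpos e ⟨c + 1, hc⟩ ∉ S := by
    rw [mem_real01 e hpos]
    show ¬ gd.wit c (c + 1) = 1
    omega
  have hWS : Wg gd e S := by
    unfold Wg
    rw [hcnt]
    exact gd.hwin c hc
  have hW' := hdes S hjS hiS hWS
  have hcnt' : cnt e (insert (reps hpos e ⟨c + 1, hc⟩) (S.erase (reps hpos e ⟨c, by omega⟩)))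
      = shiftVec c (gd.wit c) := by
    funext d
    have hsw := cnt_swap e hjS hiS d
    rw [hcnt] at hsw
    have hp1 : ((prt e (reps hpos e ⟨c, by omega⟩) : Fin t) : ℕ) = c := by rw [prt_reps]
    have hp2 : ((prt e (reps hpos e ⟨c + 1, hc⟩) : Fin t) : ℕ) = c + 1 := by rw [prt_reps]
    rw [hp1, hp2] at hsw
    rcases eq_or_ne d c with h1 | h1
    · rw [h1] at hsw ⊢
      have hv : shiftVec c (gd.wit c) c = 0 := by simp [shiftVec]
      rw [hv]
      rw [if_pos rfl, if_neg (by omega)] at hsw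
      omega
    · rcases eq_or_ne d (c + 1) with h2 | h2
      · rw [h2] at hsw ⊢
        have hv : shiftVec c (gd.wit c) (c + 1) = 1 := by simp [shiftVec]
        rw [hv]
        rw [if_neg (by omega), if_pos rfl] at hsw
        omega
      · have hv : shiftVec c (gd.wit c) d = gd.wit c d := by simp [shiftVec, h1, h2]
        rw [hv]
        rw [if_neg h1, if_neg h2] at hsw
        omega
  unfold Wg at hW'
  rw [hcnt'] at hW'
  rcases gd.hlose c hc with h | ⟨h1, h2, h3⟩
  · rcases hW' with h' | ⟨h', _⟩ <;> omega
  · rcases hW' with h' | ⟨_, h' | h'⟩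
    · omega
    · exact h2 h'
    · exact h3 h'

lemma not_desir_gt (hpos : ∀ c, 0 < nvec c) {i j : Fin N} (h : prt e i < prt e j) : ¬ Desir (Wg gd e) j i := by
  intro hd
  set c : ℕ := (prt e i : ℕ) with hcdef
  have hct : c + 1 < t := by
    have h1 : (prt e i : ℕ) < (prt e j : ℕ) := h
    have h2 := (prt e j).2
    omega
  have h1 : Desir (Wg gd e) (reps hpos e ⟨c + 1, hct⟩) j := by
    apply desir_le
    rw [prt_reps]
    have : (prt e i : ℕ) < (prt e j : ℕ) := h
    exact Fin.le_def.2 (by simp; omega)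
  have h2 : Desir (Wg gd e) i (reps hpos e ⟨c, by omega⟩) := by
    apply desir_le
    rw [prt_reps]
  exact not_desir_consec e gd hpos hct
    (desir_trans _ _ _ _ (desir_trans _ _ _ _ h1 hd) h2)

lemma card_fiber (c : Fin t) :
    (Finset.univ.filter (fun a : Fin N => prt e a = c)).card = nvec c := by
  have himg : Finset.univ.filter (fun a : Fin N => prt e a = c)
      = Finset.univ.image (fun k : Fin (nvec c) => e.symm ⟨c, k⟩) := by
    ext a
    simp only [Finset.mem_filter, Finset.mem_univ, true_and, Finset.mem_image]
    constructor
    · intro h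
      subst h
      exact ⟨(e a).2, e.symm_apply_apply a⟩
    · rintro ⟨k, rfl⟩
      simp [prt]
  rw [himg, Finset.card_image_of_injective _ (fun a b hab => by
    have := congrArg e.symm.symm hab
    simpa using this), Finset.card_univ, Fintype.card_fin]

lemma not_weighted (hpos : ∀ c, 0 < nvec c) : ¬ IsWeighted (Wg gd e) := by
  rintro ⟨q', hq', w, hw, hiff⟩
  have mk : ∀ (y : ℕ → ℕ), (∀ d, y d ≤ 1) →
      ∑ a ∈ real01 e hpos y, w a = ∑ c : Fin t, (y (c : ℕ) : ℝ) * w (reps hpos e c) := by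
    intro y hy1
    unfold real01
    rw [Finset.sum_image (fun a _ b _ hab => reps_inj e hpos hab), Finset.sum_filter]
    refine Finset.sum_congr rfl fun c _ => ?_
    rcases Nat.le_one_iff_eq_zero_or_eq_one.1 (hy1 (c : ℕ)) with h | h <;> simp [h]
  have hA := mk gd.A gd.hA1
  have hB := mk gd.B gd.hB1
  have hC := mk gd.C gd.hC1
  have hD := mk gd.D gd.hD1
  have hWA : Wg gd e (real01 e hpos gd.A) := by
    unfold Wg
    rw [cnt_real01 e hpos gd.hA1 gd.hA0]
    exact Or.inr ⟨gd.hAq, Or.inl rfl⟩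
  have hWB : Wg gd e (real01 e hpos gd.B) := by
    unfold Wg
    rw [cnt_real01 e hpos gd.hB1 gd.hB0]
    exact Or.inr ⟨gd.hBq, Or.inr rfl⟩
  have hWC : ¬ Wg gd e (real01 e hpos gd.C) := by
    unfold Wg
    rw [cnt_real01 e hpos gd.hC1 gd.hC0]
    rintro (h | ⟨_, h | h⟩)
    · have := gd.hCq; omega
    · exact gd.hCA h
    · exact gd.hCB h
  have hWD : ¬ Wg gd e (real01 e hpos gd.D) := by
    unfold Wg
    rw [cnt_real01 e hpos gd.hD1 gd.hD0]
    rintro (h | ⟨_, h | h⟩)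
    · have := gd.hDq; omega
    · exact gd.hDA h
    · exact gd.hDB h
  have h1 : q' ≤ ∑ a ∈ real01 e hpos gd.A, w a := (hiff _).1 hWA
  have h2 : q' ≤ ∑ a ∈ real01 e hpos gd.B, w a := (hiff _).1 hWB
  have h3 : ¬ q' ≤ ∑ a ∈ real01 e hpos gd.C, w a := fun h => hWC ((hiff _).2 h)
  have h4 : ¬ q' ≤ ∑ a ∈ real01 e hpos gd.D, w a := fun h => hWD ((hiff _).2 h)
  push_neg at h3 h4
  have key : ∑ a ∈ real01 e hpos gd.A, w a + ∑ a ∈ real01 e hpos gd.B, w a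
      = ∑ a ∈ real01 e hpos gd.C, w a + ∑ a ∈ real01 e hpos gd.D, w a := by
    rw [hA, hB, hC, hD, ← Finset.sum_add_distrib, ← Finset.sum_add_distrib]
    refine Finset.sum_congr rfl fun c _ => ?_
    have := gd.hsum (c : ℕ)
    have hcast : ((gd.A (c : ℕ) : ℝ) + (gd.B (c : ℕ) : ℝ)) = ((gd.C (c : ℕ) : ℝ) + (gd.D (c : ℕ) : ℝ)) := by
      exact_mod_cast congrArg (fun n : ℕ => (n : ℝ)) this
    linear_combination w (reps hpos e c) * hcast
  linarith

end Main

def gd6 : GameData 6 where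
  u := fun c => [7, 5, 4, 3, 2, 1].getD c 0
  q := 11
  A := ind [0, 3, 5]
  B := ind [1, 2, 4]
  C := ind [0, 2]
  D := ind [1, 3, 4, 5]
  wit := fun c => ind (if c = 0 then [0, 2, 5] else if c = 1 then [0, 1]
    else if c = 2 then [1, 2, 4, 5] else if c = 3 then [0, 3, 5] else [1, 2, 4])
  hu := by intro c hc; have hc' : c ≤ 4 := (by omega); interval_cases c <;> decide
  hupos := by intro c hc; interval_cases c <;> decide
  hq := by decide
  husum := by decide
  hA1 := fun c => ind_le_one _ c
  hB1 := fun c => ind_le_one _ c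
  hC1 := fun c => ind_le_one _ c
  hD1 := fun c => ind_le_one _ c
  hA0 := by intro c hc; apply ind_eq_zero; simp; omega
  hB0 := by intro c hc; apply ind_eq_zero; simp; omega
  hC0 := by intro c hc; apply ind_eq_zero; simp; omega
  hD0 := by intro c hc; apply ind_eq_zero; simp; omega
  hAq := by decide
  hBq := by decide
  hCq := by decide
  hDq := by decide
  hsum := by
    intro c
    simp only [ind, List.mem_cons, List.mem_singleton, List.not_mem_nil, or_false]
    split_ifs <;> omega
  hCA := fun h => absurd (congrFun h 3) (by decide)
  hCB := fun h => absurd (congrFun h 0) (by decide)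
  hDA := fun h => absurd (congrFun h 1) (by decide)
  hDB := fun h => absurd (congrFun h 3) (by decide)
  hw1 := fun c _ d => ind_le_one _ d
  hw0 := by
    intro c hc d hd
    apply ind_eq_zero
    split_ifs <;> simp <;> omega
  hwc := by intro c hc; have hc' : c ≤ 4 := (by omega); interval_cases c <;> decide
  hwc1 := by intro c hc; have hc' : c ≤ 4 := (by omega); interval_cases c <;> decide
  hwin := by
    intro c hc
    have hc' : c ≤ 4 := by omega
    interval_cases c
    · exact Or.inl (by decide)
    · exact Or.inl (by decide)
    · exact Or.inl (by decide)
    · exact Or.inr ⟨by decide, Or.inl rfl⟩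
    · exact Or.inr ⟨by decide, Or.inr rfl⟩
  hlose := by
    intro c hc
    have hc' : c ≤ 4 := by omega
    interval_cases c
    · exact Or.inl (by decide)
    · exact Or.inr ⟨by decide, fun h => absurd (congrFun h 3) (by decide),
        fun h => absurd (congrFun h 0) (by decide)⟩
    · exact Or.inr ⟨by decide, fun h => absurd (congrFun h 0) (by decide),
        fun h => absurd (congrFun h 2) (by decide)⟩
    · exact Or.inl (by decide)
    · exact Or.inl (by decide)

def gd7 : GameData 7 where
  u := fun c => [8, 6, 5, 4, 3, 2, 1].getD c 0
  q := 14
  A := ind [0, 3, 5]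
  B := ind [1, 2, 4]
  C := ind [0, 1]
  D := ind [2, 3, 4, 5]
  wit := fun c => ind (if c = 0 then [0, 2, 5] else if c = 1 then [0, 1, 6]
    else if c = 2 then [1, 2, 4, 6] else if c = 3 then [0, 3, 5, 6]
    else if c = 4 then [1, 2, 4, 6] else [0, 2, 5])
  hu := by intro c hc; have hc' : c ≤ 5 := (by omega); interval_cases c <;> decide
  hupos := by intro c hc; interval_cases c <;> decide
  hq := by decide
  husum := by decide
  hA1 := fun c => ind_le_one _ c
  hB1 := fun c => ind_le_one _ c
  hC1 := fun c => ind_le_one _ c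
  hD1 := fun c => ind_le_one _ c
  hA0 := by intro c hc; apply ind_eq_zero; simp; omega
  hB0 := by intro c hc; apply ind_eq_zero; simp; omega
  hC0 := by intro c hc; apply ind_eq_zero; simp; omega
  hD0 := by intro c hc; apply ind_eq_zero; simp; omega
  hAq := by decide
  hBq := by decide
  hCq := by decide
  hDq := by decide
  hsum := by
    intro c
    simp only [ind, List.mem_cons, List.mem_singleton, List.not_mem_nil, or_false]
    split_ifs <;> omega
  hCA := fun h => absurd (congrFun h 1) (by decide)
  hCB := fun h => absurd (congrFun h 0) (by decide)
  hDA := fun h => absurd (congrFun h 2) (by decide)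
  hDB := fun h => absurd (congrFun h 3) (by decide)
  hw1 := fun c _ d => ind_le_one _ d
  hw0 := by
    intro c hc d hd
    apply ind_eq_zero
    split_ifs <;> simp <;> omega
  hwc := by intro c hc; have hc' : c ≤ 5 := (by omega); interval_cases c <;> decide
  hwc1 := by intro c hc; have hc' : c ≤ 5 := (by omega); interval_cases c <;> decide
  hwin := by
    intro c hc
    have hc' : c ≤ 5 := (by omega)
    interval_cases c <;> exact Or.inl (by decide)
  hlose := by
    intro c hc
    have hc' : c ≤ 5 := (by omega)
    interval_cases c
    · exact Or.inl (by decide)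
    · exact Or.inr ⟨by decide, fun h => absurd (congrFun h 2) (by decide),
        fun h => absurd (congrFun h 0) (by decide)⟩
    · exact Or.inr ⟨by decide, fun h => absurd (congrFun h 0) (by decide),
        fun h => absurd (congrFun h 2) (by decide)⟩
    · exact Or.inr ⟨by decide, fun h => absurd (congrFun h 3) (by decide),
        fun h => absurd (congrFun h 0) (by decide)⟩
    · exact Or.inr ⟨by decide, fun h => absurd (congrFun h 0) (by decide),
        fun h => absurd (congrFun h 4) (by decide)⟩
    · exact Or.inr ⟨by decide, fun h => absurd (congrFun h 2) (by decide),
        fun h => absurd (congrFun h 0) (by decide)⟩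

def gd8 : GameData 8 where
  u := fun c => [17, 14, 12, 10, 8, 6, 4, 2].getD c 0
  q := 26
  A := ind [1, 3, 7]
  B := ind [2, 4, 5]
  C := ind [1, 2]
  D := ind [3, 4, 5, 7]
  wit := fun c => ind (if c = 0 then [0, 3] else if c = 1 then [1, 3, 7]
    else if c = 2 then [2, 4, 5] else if c = 3 then [0, 3]
    else if c = 4 then [0, 4, 7] else if c = 5 then [2, 4, 5, 7] else [0, 5, 6])
  hu := by intro c hc; have hc' : c ≤ 6 := (by omega); interval_cases c <;> decide
  hupos := by intro c hc; interval_cases c <;> decide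
  hq := by decide
  husum := by decide
  hA1 := fun c => ind_le_one _ c
  hB1 := fun c => ind_le_one _ c
  hC1 := fun c => ind_le_one _ c
  hD1 := fun c => ind_le_one _ c
  hA0 := by intro c hc; apply ind_eq_zero; simp; omega
  hB0 := by intro c hc; apply ind_eq_zero; simp; omega
  hC0 := by intro c hc; apply ind_eq_zero; simp; omega
  hD0 := by intro c hc; apply ind_eq_zero; simp; omega
  hAq := by decide
  hBq := by decide
  hCq := by decide
  hDq := by decide
  hsum := by
    intro c
    simp only [ind, List.mem_cons, List.mem_singleton, List.not_mem_nil, or_false]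
    split_ifs <;> omega
  hCA := fun h => absurd (congrFun h 2) (by decide)
  hCB := fun h => absurd (congrFun h 1) (by decide)
  hDA := fun h => absurd (congrFun h 4) (by decide)
  hDB := fun h => absurd (congrFun h 3) (by decide)
  hw1 := fun c _ d => ind_le_one _ d
  hw0 := by
    intro c hc d hd
    apply ind_eq_zero
    split_ifs <;> simp <;> omega
  hwc := by intro c hc; have hc' : c ≤ 6 := (by omega); interval_cases c <;> decide
  hwc1 := by intro c hc; have hc' : c ≤ 6 := (by omega); interval_cases c <;> decide
  hwin := by
    intro c hc
    have hc' : c ≤ 6 := (by omega)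
    interval_cases c
    · exact Or.inl (by decide)
    · exact Or.inr ⟨by decide, Or.inl rfl⟩
    · exact Or.inr ⟨by decide, Or.inr rfl⟩
    · exact Or.inl (by decide)
    · exact Or.inl (by decide)
    · exact Or.inl (by decide)
    · exact Or.inl (by decide)
  hlose := by
    intro c hc
    have hc' : c ≤ 6 := (by omega)
    interval_cases c
    · exact Or.inl (by decide)
    · exact Or.inl (by decide)
    · exact Or.inl (by decide)
    · exact Or.inl (by decide)
    · exact Or.inl (by decide)
    · exact Or.inr ⟨by decide, fun h => absurd (congrFun h 1) (by decide),
        fun h => absurd (congrFun h 5) (by decide)⟩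
    · exact Or.inl (by decide)

def uBig (t : ℕ) : ℕ → ℕ :=
  fun c => if c = t - 1 then 1 else if c = t - 2 then 3 else 2 * (t - 1 - c)

lemma uBig_last (t : ℕ) : uBig t (t - 1) = 1 := by
  unfold uBig; rw [if_pos rfl]

lemma uBig_snd {t : ℕ} (ht : 9 ≤ t) : uBig t (t - 2) = 3 := by
  unfold uBig; rw [if_neg (by omega), if_pos rfl]

lemma uBig_eval {t : ℕ} (ht : 9 ≤ t) {c : ℕ} (hc : c ≤ t - 3) :
    uBig t c = 2 * (t - 1 - c) := by
  unfold uBig; rw [if_neg (by omega), if_neg (by omega)]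

def witBig (t : ℕ) (c : ℕ) : ℕ → ℕ :=
  if c = 0 then ind [0, 3, t - 3, t - 1]
  else if c = 1 then ind [0, 1, t - 1]
  else if c = 2 then ind [1, 2, t - 3, t - 1]
  else if c = t - 3 then ind [0, 3, t - 3, t - 1]
  else if c = t - 2 then ind [0, 2, t - 2]
  else if 2 * c = t then ind [1, c - 1, c, t - 1]
  else if 2 * c = t - 1 then ind [2, c - 1, c, t - 1]
  else ind [0, c, t - c, t - 1]

lemma witBig_le_one (t c d : ℕ) : witBig t c d ≤ 1 := by
  unfold witBig
  split_ifs <;> exact ind_le_one _ d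

lemma witBig_zero {t c : ℕ} (ht : 9 ≤ t) (hc : c + 1 < t) (d : ℕ) (hd : t ≤ d) :
    witBig t c d = 0 := by
  unfold witBig
  split_ifs <;> (apply ind_eq_zero; simp <;> omega)

lemma witBig_self {t c : ℕ} (ht : 9 ≤ t) (hc : c + 1 < t) : witBig t c c = 1 := by
  unfold witBig
  split_ifs <;> (apply ind_eq_one; simp <;> omega)

lemma witBig_succ {t c : ℕ} (ht : 9 ≤ t) (hc : c + 1 < t) : witBig t c (c + 1) = 0 := by
  unfold witBig
  split_ifs <;> (apply ind_eq_zero; simp <;> omega)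

set_option maxHeartbeats 1000000 in
lemma witBig_sum {t c : ℕ} (ht : 9 ≤ t) (hc : c + 1 < t) :
    Us t (uBig t) (witBig t c) = 4 * t - 5 := by
  unfold witBig
  split_ifs with hb1 hb2 hb3 hb4 hb5 hb6 hb7
  · rw [Us_ind t _ _ (by simp <;> omega) (by intro x hx; simp at hx <;> omega)]
    simp only [List.map_cons, List.map_nil, List.sum_cons, List.sum_nil]
    rw [uBig_eval ht (show (0:ℕ) ≤ t - 3 by omega),
      uBig_eval ht (show (3:ℕ) ≤ t - 3 by omega),
      uBig_eval ht (show t - 3 ≤ t - 3 by omega), uBig_last t]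
    omega
  · rw [Us_ind t _ _ (by simp <;> omega) (by intro x hx; simp at hx <;> omega)]
    simp only [List.map_cons, List.map_nil, List.sum_cons, List.sum_nil]
    rw [uBig_eval ht (show (0:ℕ) ≤ t - 3 by omega),
      uBig_eval ht (show (1:ℕ) ≤ t - 3 by omega), uBig_last t]
    omega
  · rw [Us_ind t _ _ (by simp <;> omega) (by intro x hx; simp at hx <;> omega)]
    simp only [List.map_cons, List.map_nil, List.sum_cons, List.sum_nil]
    rw [uBig_eval ht (show (1:ℕ) ≤ t - 3 by omega),
      uBig_eval ht (show (2:ℕ) ≤ t - 3 by omega),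
      uBig_eval ht (show t - 3 ≤ t - 3 by omega), uBig_last t]
    omega
  · rw [Us_ind t _ _ (by simp <;> omega) (by intro x hx; simp at hx <;> omega)]
    simp only [List.map_cons, List.map_nil, List.sum_cons, List.sum_nil]
    rw [uBig_eval ht (show (0:ℕ) ≤ t - 3 by omega),
      uBig_eval ht (show (3:ℕ) ≤ t - 3 by omega),
      uBig_eval ht (show t - 3 ≤ t - 3 by omega), uBig_last t]
    omega
  · rw [Us_ind t _ _ (by simp <;> omega) (by intro x hx; simp at hx <;> omega)]
    simp only [List.map_cons, List.map_nil, List.sum_cons, List.sum_nil]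
    rw [uBig_eval ht (show (0:ℕ) ≤ t - 3 by omega),
      uBig_eval ht (show (2:ℕ) ≤ t - 3 by omega), uBig_snd ht]
    omega
  · rw [Us_ind t _ _ (by simp <;> omega) (by intro x hx; simp at hx <;> omega)]
    simp only [List.map_cons, List.map_nil, List.sum_cons, List.sum_nil]
    rw [uBig_eval ht (show (1:ℕ) ≤ t - 3 by omega),
      uBig_eval ht (show c - 1 ≤ t - 3 by omega),
      uBig_eval ht (show c ≤ t - 3 by omega), uBig_last t]
    omega
  · rw [Us_ind t _ _ (by simp <;> omega) (by intro x hx; simp at hx <;> omega)]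
    simp only [List.map_cons, List.map_nil, List.sum_cons, List.sum_nil]
    rw [uBig_eval ht (show (2:ℕ) ≤ t - 3 by omega),
      uBig_eval ht (show c - 1 ≤ t - 3 by omega),
      uBig_eval ht (show c ≤ t - 3 by omega), uBig_last t]
    omega
  · rw [Us_ind t _ _ (by simp <;> omega) (by intro x hx; simp at hx <;> omega)]
    simp only [List.map_cons, List.map_nil, List.sum_cons, List.sum_nil]
    rw [uBig_eval ht (show (0:ℕ) ≤ t - 3 by omega),
      uBig_eval ht (show c ≤ t - 3 by omega),
      uBig_eval ht (show t - c ≤ t - 3 by omega), uBig_last t]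
    omega

lemma witBig_lose {t c : ℕ} (ht : 9 ≤ t) (hc : c + 1 < t) :
    Us t (uBig t) (shiftVec c (witBig t c)) < 4 * t - 6 ∨
      (Us t (uBig t) (shiftVec c (witBig t c)) = 4 * t - 6 ∧
        shiftVec c (witBig t c) ≠ ind [0, 4, t - 4] ∧
        shiftVec c (witBig t c) ≠ ind [1, 2, t - 3]) := by
  have hsh := Us_shift t (uBig t) c (witBig t c) hc (witBig_self ht hc) (witBig_succ ht hc)
  rw [witBig_sum ht hc] at hsh
  by_cases hcm : c = t - 3
  · right
    have e1 : uBig t c = 2 * (t - 1 - c) := uBig_eval ht (by omega)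
    have e2 : uBig t (c + 1) = 3 := by rw [show c + 1 = t - 2 by omega]; exact uBig_snd ht
    refine ⟨by omega, ?_, ?_⟩
    · intro h
      have h1 := congrFun h (t - 1)
      have hL : shiftVec c (witBig t c) (t - 1) = 1 := by
        unfold shiftVec
        rw [if_neg (by omega), if_neg (by omega)]
        have : witBig t c = ind [0, 3, t - 3, t - 1] := by
          unfold witBig
          rw [if_neg (by omega), if_neg (by omega), if_neg (by omega), if_pos hcm]
        rw [this]
        exact ind_eq_one (by simp)
      have hR : ind [0, 4, t - 4] (t - 1) = 0 := ind_eq_zero (by simp <;> omega)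
      rw [hL, hR] at h1
      exact one_ne_zero h1
    · intro h
      have h1 := congrFun h (t - 1)
      have hL : shiftVec c (witBig t c) (t - 1) = 1 := by
        unfold shiftVec
        rw [if_neg (by omega), if_neg (by omega)]
        have : witBig t c = ind [0, 3, t - 3, t - 1] := by
          unfold witBig
          rw [if_neg (by omega), if_neg (by omega), if_neg (by omega), if_pos hcm]
        rw [this]
        exact ind_eq_one (by simp)
      have hR : ind [1, 2, t - 3] (t - 1) = 0 := ind_eq_zero (by simp <;> omega)
      rw [hL, hR] at h1
      exact one_ne_zero h1
  · left
    rcases eq_or_ne c (t - 2) with hc2 | hc2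
    · have e1 : uBig t c = 3 := by rw [hc2]; exact uBig_snd ht
      have e2 : uBig t (c + 1) = 1 := by rw [show c + 1 = t - 1 by omega]; exact uBig_last t
      omega
    · have e1 : uBig t c = 2 * (t - 1 - c) := uBig_eval ht (by omega)
      have e2 : uBig t (c + 1) = 2 * (t - 1 - (c + 1)) := uBig_eval ht (by omega)
      omega

set_option maxHeartbeats 1000000 in
def gdBig (t : ℕ) (ht : 9 ≤ t) : GameData t where
  u := uBig t
  q := 4 * t - 6
  A := ind [0, 4, t - 4]
  B := ind [1, 2, t - 3]
  C := ind [0, 1]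
  D := ind [2, 4, t - 4, t - 3]
  wit := witBig t
  hu := by intro c hc; unfold uBig; split_ifs <;> omega
  hupos := by intro c hc; unfold uBig; split_ifs <;> omega
  hq := by omega
  husum := by
    have h0 : (0 : ℕ) ∈ Finset.range t := by simp; omega
    have h1 : (1 : ℕ) ∈ (Finset.range t).erase 0 := by simp; omega
    have h2 : (2 : ℕ) ∈ ((Finset.range t).erase 0).erase 1 := by simp; omega
    rw [← Finset.add_sum_erase _ _ h0, ← Finset.add_sum_erase _ _ h1,
      ← Finset.add_sum_erase _ _ h2]
    have e0 := uBig_eval ht (show (0:ℕ) ≤ t - 3 by omega)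
    have e1 := uBig_eval ht (show (1:ℕ) ≤ t - 3 by omega)
    have e2 := uBig_eval ht (show (2:ℕ) ≤ t - 3 by omega)
    rw [e0, e1, e2]
    omega
  hA1 := fun c => ind_le_one _ c
  hB1 := fun c => ind_le_one _ c
  hC1 := fun c => ind_le_one _ c
  hD1 := fun c => ind_le_one _ c
  hA0 := by intro c hc; apply ind_eq_zero; simp <;> omega
  hB0 := by intro c hc; apply ind_eq_zero; simp <;> omega
  hC0 := by intro c hc; apply ind_eq_zero; simp <;> omega
  hD0 := by intro c hc; apply ind_eq_zero; simp <;> omega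
  hAq := by
    rw [Us_ind t _ _ (by simp <;> omega) (by intro x hx; simp at hx <;> omega)]
    simp only [List.map_cons, List.map_nil, List.sum_cons, List.sum_nil]
    rw [uBig_eval ht (show (0:ℕ) ≤ t - 3 by omega),
      uBig_eval ht (show (4:ℕ) ≤ t - 3 by omega),
      uBig_eval ht (show t - 4 ≤ t - 3 by omega)]
    omega
  hBq := by
    rw [Us_ind t _ _ (by simp <;> omega) (by intro x hx; simp at hx <;> omega)]
    simp only [List.map_cons, List.map_nil, List.sum_cons, List.sum_nil]
    rw [uBig_eval ht (show (1:ℕ) ≤ t - 3 by omega),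
      uBig_eval ht (show (2:ℕ) ≤ t - 3 by omega),
      uBig_eval ht (show t - 3 ≤ t - 3 by omega)]
    omega
  hCq := by
    rw [Us_ind t _ _ (by simp <;> omega) (by intro x hx; simp at hx <;> omega)]
    simp only [List.map_cons, List.map_nil, List.sum_cons, List.sum_nil]
    rw [uBig_eval ht (show (0:ℕ) ≤ t - 3 by omega),
      uBig_eval ht (show (1:ℕ) ≤ t - 3 by omega)]
    omega
  hDq := by
    rw [Us_ind t _ _ (by simp <;> omega) (by intro x hx; simp at hx <;> omega)]
    simp only [List.map_cons, List.map_nil, List.sum_cons, List.sum_nil]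
    rw [uBig_eval ht (show (2:ℕ) ≤ t - 3 by omega),
      uBig_eval ht (show (4:ℕ) ≤ t - 3 by omega),
      uBig_eval ht (show t - 4 ≤ t - 3 by omega),
      uBig_eval ht (show t - 3 ≤ t - 3 by omega)]
    omega
  hsum := by
    intro c
    simp only [ind, List.mem_cons, List.mem_singleton, List.not_mem_nil, or_false]
    split_ifs <;> omega
  hCA := fun h => by
    have h1 := congrFun h 1
    rw [ind_eq_one (by simp), ind_eq_zero (by simp <;> omega)] at h1
    exact one_ne_zero h1
  hCB := fun h => by
    have h1 := congrFun h 0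
    rw [ind_eq_one (by simp), ind_eq_zero (by simp <;> omega)] at h1
    exact one_ne_zero h1
  hDA := fun h => by
    have h1 := congrFun h 2
    rw [ind_eq_one (by simp), ind_eq_zero (by simp <;> omega)] at h1
    exact one_ne_zero h1
  hDB := fun h => by
    have h1 := congrFun h 4
    rw [ind_eq_one (by simp), ind_eq_zero (by simp <;> omega)] at h1
    exact one_ne_zero h1
  hw1 := fun c _ d => witBig_le_one t c d
  hw0 := fun c hc d hd => witBig_zero ht hc d hd
  hwc := fun c hc => witBig_self ht hc
  hwc1 := fun c hc => witBig_succ ht hc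
  hwin := fun c hc => Or.inl (by rw [witBig_sum ht hc]; omega)
  hlose := fun c hc => witBig_lose ht hc

lemma gameData_exists (t : ℕ) (ht : 6 ≤ t) : Nonempty (GameData t) := by
  rcases lt_or_ge t 9 with h9 | h9
  · interval_cases t
    · exact ⟨gd6⟩
    · exact ⟨gd7⟩
    · exact ⟨gd8⟩
  · exact ⟨gdBig t h9⟩

end CSGAux

/-- For every `t ≥ 6` and every positive type composition `(n_1,…,n_t)`, there is a
complete simple game with exactly `t` desirability classes of the prescribed sizes
that is not weighted. -/
theorem six_or_more_types_not_weighted (t : ℕ) (ht : 6 ≤ t)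
    (nvec : Fin t → ℕ) (hpos : ∀ c, 0 < nvec c) :
    ∃ (W : Finset (Fin (∑ c, nvec c)) → Prop) (part : Fin (∑ c, nvec c) → Fin t),
      SimpleGame (∑ c, nvec c) W ∧ DesirTotalPreorder W ∧
        IsDesirPartition W part ∧ OrderedPartition W part ∧
        (∀ c, (Finset.univ.filter (fun a => part a = c)).card = nvec c) ∧
        ¬ IsWeighted W := by
  classical
  obtain ⟨gd⟩ := CSGAux.gameData_exists t ht
  have hcard : Fintype.card (Fin (∑ c, nvec c)) = Fintype.card (Σ c : Fin t, Fin (nvec c)) := by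
    simp [Fintype.card_sigma]
  let e : Fin (∑ c, nvec c) ≃ Σ c : Fin t, Fin (nvec c) := Fintype.equivOfCardEq hcard
  refine ⟨CSGAux.Wg gd e, CSGAux.prt e, ?_, ?_, ?_, ?_, ?_, ?_⟩
  · refine ⟨CSGAux.Wg_empty e gd, CSGAux.Wg_univ e gd hpos, ?_⟩
    intro S T hST hW
    exact CSGAux.Wg_mono e gd hST hW
  · refine ⟨?_, ?_, ?_⟩
    · intro i S h1 h2 _
      exact (h2 h1).elim
    · intro i j
      rcases le_total (CSGAux.prt e i) (CSGAux.prt e j) with h | h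
      · exact Or.inl (CSGAux.desir_le e gd h)
      · exact Or.inr (CSGAux.desir_le e gd h)
    · intro i j k hij hjk
      exact CSGAux.desir_trans _ i j k hij hjk
  · intro i j
    constructor
    · rintro ⟨hij, hji⟩
      by_contra hne
      rcases lt_or_gt_of_ne hne with h | h
      · exact CSGAux.not_desir_gt e gd hpos h hji
      · exact CSGAux.not_desir_gt e gd hpos h hij
    · intro h
      exact ⟨CSGAux.desir_le e gd (le_of_eq h), CSGAux.desir_le e gd (ge_of_eq h)⟩
  · intro i j hle
    exact CSGAux.desir_le e gd hle
  · intro c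
    exact CSGAux.card_fiber e c
  · exact CSGAux.not_weighted e gd hpos
end

section
/- Every complete simple game on N={1,…,n} with exactly two desirability classes {1} and {2,…,n} (type composition (1,n−1)) is weighted. More precisely, such a game has either a unique shift-minimal winning vector (1,m_1) with 0≤m_1≤n−2, realized by the weighted representation [n; n−m_1, 1,…,1], or two shift-minimal winning vectors (1,m_1),(0,m_0) with 0≤m_1, m_1+2≤m_0≤n−1, realized by [m_0; m_0−m_1, 1,…,1]. -/
/-!
Since every player other than `0` is equivalent to every other, the exchange moves
`insert i (S.erase j)` connect any two coalitions that agree on player `0` and have the same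
size, so whether `S` wins depends only on the coalition vector `(0 ∈ S, #(S.erase 0))`.
By monotonicity each of the two classes of coalitions then wins exactly from a threshold on,
`m₁` for those containing `0` and `m₀` for the others (`m₀ = n` when none of them wins).
That `0` is strictly more desirable than `1` yields a winning `S₀ ∋ 0` for which exchanging
`0` for `1` loses, whence `m₁ ≤ n - 2` and `m₁ + 2 ≤ m₀`; and with these thresholds the
weights `m₀ - m₁, 1, …, 1` with quota `m₀` represent the game.
-/

open Finset

theorem sum_ite_eq_card_erase_add {α R : Type*} [DecidableEq α] [AddCommMonoidWithOne R]
    (p : α) (c : R) (S : Finset α) :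
    ∑ i ∈ S, (if i = p then c else 1) = #(S.erase p) + if p ∈ S then c else 0 := by
  rw [sum_ite, filter_eq', filter_ne']
  split_ifs <;> simp [add_comm]

theorem iff_le_sum_ite_of_thresholds {α : Type*} [DecidableEq α] {W : Finset α → Prop}
    {p : α} {m₀ m₁ : ℕ} (h₁ : ∀ S, p ∈ S → (W S ↔ m₁ ≤ #(S.erase p)))
    (h₀ : ∀ S, p ∉ S → (W S ↔ m₀ ≤ #(S.erase p))) (S : Finset α) :
    W S ↔ (m₀ : ℝ) ≤ ∑ i ∈ S, (if i = p then (m₀ : ℝ) - m₁ else 1) := by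
  rw [sum_ite_eq_card_erase_add]
  by_cases hpS : p ∈ S
  · rw [if_pos hpS, h₁ S hpS, ← Nat.cast_le (α := ℝ)]
    constructor <;> intro h <;> linarith
  · rw [if_neg hpS, add_zero, h₀ S hpS, Nat.cast_le]

section
variable {n : ℕ} {W : Finset (Fin n) → Prop} {p : Fin n}

theorem isWeighted_of_iff_le_sum_ite {q c : ℝ} (hq : 0 < q) (hc : 0 ≤ c)
    (h : ∀ S, W S ↔ q ≤ ∑ i ∈ S, (if i = p then c else 1)) : IsWeighted W :=
  ⟨q, hq, fun i => if i = p then c else 1, fun i => by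
    dsimp only
    split_ifs
    exacts [hc, zero_le_one], h⟩

theorem winning_of_card_eq (hswap : ∀ i j, i ≠ p → j ≠ p → Desir W i j)
    {S T : Finset (Fin n)} (hp : p ∈ S ↔ p ∈ T) (hcard : #S = #T) (hS : W S) : W T := by
  induction hk : #(S \ T) generalizing S with
  | zero =>
    have : S ⊆ T := sdiff_eq_empty_iff_subset.1 (card_eq_zero.1 hk)
    rwa [eq_of_subset_of_card_le this hcard.ge] at hS
  | succ k ih =>
    obtain ⟨j, hj⟩ : (S \ T).Nonempty := card_pos.1 (by omega)
    obtain ⟨i, hi⟩ : (T \ S).Nonempty := card_pos.1 (by rw [← card_sdiff_comm hcard]; omega)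
    rw [mem_sdiff] at hi hj
    have hip : i ≠ p := by rintro rfl; exact hi.2 (hp.2 hi.1)
    have hjp : j ≠ p := by rintro rfl; exact hj.2 (hp.1 hj.1)
    have hsdiff : insert i (S.erase j) \ T = (S \ T).erase j := by
      ext x
      simp only [mem_sdiff, mem_insert, mem_erase]
      constructor
      · rintro ⟨rfl | ⟨hxj, hxS⟩, hxT⟩
        · exact absurd hi.1 hxT
        · exact ⟨hxj, hxS, hxT⟩
      · rintro ⟨hxj, hxS, hxT⟩
        exact ⟨Or.inr ⟨hxj, hxS⟩, hxT⟩
    refine ih ?_ ?_ (hswap i j hip hjp S hj.1 hi.2 hS) ?_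
    · simp [hip.symm, hjp.symm, hp]
    · rw [card_insert_of_notMem (by simp [hi.2]), card_erase_add_one hj.1, hcard]
    · rw [hsdiff, card_erase_of_mem (mem_sdiff.2 hj), hk, Nat.add_sub_cancel]

theorem winning_of_card_erase_le (hmono : ∀ ⦃S T : Finset (Fin n)⦄, S ⊆ T → W S → W T)
    (hswap : ∀ i j, i ≠ p → j ≠ p → Desir W i j) {S T : Finset (Fin n)}
    (hp : p ∈ T ↔ p ∈ S) (hcard : #(T.erase p) ≤ #(S.erase p)) (hT : W T) : W S := by
  have hTS : #T ≤ #S := by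
    by_cases hpS : p ∈ S
    · rw [← card_erase_add_one hpS, ← card_erase_add_one (hp.2 hpS)]
      omega
    · rwa [← erase_eq_of_notMem hpS, ← erase_eq_of_notMem (mt hp.1 hpS)]
  obtain ⟨U, hTU, hUTS, hU⟩ :=
    exists_subsuperset_card_eq subset_union_left hTS (card_le_card subset_union_right)
  refine winning_of_card_eq hswap ⟨fun hpU => ?_, fun hpS => hTU (hp.2 hpS)⟩ hU (hmono hTU hT)
  rcases mem_union.1 (hUTS hpU) with hpT | hpS
  exacts [hp.1 hpT, hpS]

theorem exists_card_erase_threshold (hmono : ∀ ⦃S T : Finset (Fin n)⦄, S ⊆ T → W S → W T)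
    (hswap : ∀ i j, i ≠ p → j ≠ p → Desir W i j) {S₀ : Finset (Fin n)} (h₀ : W S₀) :
    ∃ m ≤ #(S₀.erase p), ∀ S, (p ∈ S ↔ p ∈ S₀) → (W S ↔ m ≤ #(S.erase p)) := by
  classical
  let P : ℕ → Prop := fun k => ∃ T, (p ∈ T ↔ p ∈ S₀) ∧ #(T.erase p) ≤ k ∧ W T
  have hP : P #(S₀.erase p) := ⟨S₀, Iff.rfl, le_rfl, h₀⟩
  refine ⟨Nat.find ⟨_, hP⟩, Nat.find_min' _ hP, fun S hS =>
    ⟨fun hW => Nat.find_min' _ ⟨S, hS, le_rfl, hW⟩, fun hle => ?_⟩⟩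
  obtain ⟨T, hT, hTk, hWT⟩ := Nat.find_spec (p := P) ⟨_, hP⟩
  exact winning_of_card_erase_le hmono hswap (hT.trans hS.symm) (hTk.trans hle) hWT

theorem Fin.card_erase_lt (p : Fin n) (S : Finset (Fin n)) : #(S.erase p) < n := by
  simpa using card_lt_univ_of_notMem (notMem_erase p S)

theorem exists_thresholds_of_not_desir (hmono : ∀ ⦃S T : Finset (Fin n)⦄, S ⊆ T → W S → W T)
    (hswap : ∀ i j, i ≠ p → j ≠ p → Desir W i j) {q : Fin n} (hqp : ¬ Desir W q p) :
    ∃ m₀ m₁ : ℕ, m₁ + 2 ≤ m₀ ∧ m₀ ≤ n ∧ (∀ S, p ∈ S → (W S ↔ m₁ ≤ #(S.erase p))) ∧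
      ∀ S, p ∉ S → (W S ↔ m₀ ≤ #(S.erase p)) := by
  obtain ⟨S₀, hpS₀, hqS₀, hW₀, hlose⟩ :
      ∃ S, p ∈ S ∧ q ∉ S ∧ W S ∧ ¬ W (insert q (S.erase p)) := by
    simpa [Desir] using hqp
  obtain ⟨m₁, hm₁S₀, hm₁⟩ := exists_card_erase_threshold hmono hswap hW₀
  have hm₁ : ∀ S, p ∈ S → (W S ↔ m₁ ≤ #(S.erase p)) := fun S hS => hm₁ S (iff_of_true hS hpS₀)
  set L := insert q (S₀.erase p)
  have hpq : p ≠ q := fun h => hqS₀ (h ▸ hpS₀)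
  have hpL : p ∉ L := by simp [L, hpq]
  have hL : #(L.erase p) = #(S₀.erase p) + 1 := by
    rw [erase_eq_of_notMem hpL, card_insert_of_notMem (by simp [hqS₀])]
  by_cases hpless : ∃ S, p ∉ S ∧ W S
  · obtain ⟨S₁, hpS₁, hW₁⟩ := hpless
    obtain ⟨m₀, hm₀S₁, hm₀⟩ := exists_card_erase_threshold hmono hswap hW₁
    have hm₀ : ∀ S, p ∉ S → (W S ↔ m₀ ≤ #(S.erase p)) := fun S hS =>
      hm₀ S (iff_of_false hS hpS₁)
    refine ⟨m₀, m₁, ?_, hm₀S₁.trans (Fin.card_erase_lt p S₁).le, hm₁, hm₀⟩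
    have := mt (hm₀ L hpL).2 hlose
    omega
  · push Not at hpless
    refine ⟨n, m₁, ?_, le_rfl, hm₁, fun S hS =>
      iff_of_false (hpless S hS) (Fin.card_erase_lt p S).not_ge⟩
    have := Fin.card_erase_lt p L
    omega

end

/-- Every complete simple game with type composition `(1, n-1)` (agent `0` forming
the more desirable singleton class, agents `1,…,n-1` the other class) is weighted:
either it has a unique shift-minimal winning vector `(1,m₁)` with `0 ≤ m₁ ≤ n-2`,
realized by `[n; n-m₁, 1,…,1]`, or two shift-minimal winning vectors
`(1,m₁),(0,m₀)` with `m₁+2 ≤ m₀ ≤ n-1`, realized by `[m₀; m₀-m₁, 1,…,1]`. -/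
theorem one_star_family_weighted (n : ℕ) (hn : 2 ≤ n)
    (W : Finset (Fin n) → Prop) (hsg : SimpleGame n W)
    (hclass : ∀ i j : Fin n, (Desir W i j ∧ Desir W j i) ↔ ((i : ℕ) = 0 ↔ (j : ℕ) = 0))
    (hstrong : ∀ j : Fin n, Desir W ⟨0, by omega⟩ j) :
    IsWeighted W ∧
      ((∃ m₁ : ℕ, m₁ ≤ n - 2 ∧
          ∀ S : Finset (Fin n), W S ↔
            (n : ℝ) ≤ ∑ i ∈ S, (if (i : ℕ) = 0 then (n : ℝ) - m₁ else 1)) ∨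
        (∃ m₀ m₁ : ℕ, m₁ + 2 ≤ m₀ ∧ m₀ ≤ n - 1 ∧
          ∀ S : Finset (Fin n), W S ↔
            (m₀ : ℝ) ≤ ∑ i ∈ S, (if (i : ℕ) = 0 then (m₀ : ℝ) - m₁ else 1))) := by
  set p : Fin n := ⟨0, by omega⟩
  have hp : ∀ i : Fin n, (i : ℕ) = 0 ↔ i = p := fun i => by simp [p, Fin.ext_iff]
  simp only [hp]
  have hswap : ∀ i j, i ≠ p → j ≠ p → Desir W i j := fun i j hi hj =>
    ((hclass i j).2 (by simp [hp, hi, hj])).1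
  have hqp : ¬ Desir W ⟨1, by omega⟩ p := fun h => by
    simpa [p] using (hclass _ p).1 ⟨h, hstrong _⟩
  obtain ⟨m₀, m₁, hm, hm₀n, hm₁, hm₀⟩ := exists_thresholds_of_not_desir hsg.2.2 hswap hqp
  have hrep := iff_le_sum_ite_of_thresholds hm₁ hm₀
  refine ⟨isWeighted_of_iff_le_sum_ite (by exact_mod_cast (by omega : 0 < m₀))
    (sub_nonneg.2 (by exact_mod_cast (by omega : m₁ ≤ m₀))) hrep, ?_⟩
  rcases hm₀n.lt_or_eq with hlt | rfl
  · exact Or.inr ⟨m₀, m₁, hm, by omega, hrep⟩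
  · exact Or.inl ⟨m₁, by omega, hrep⟩
end

section
/- Every complete simple game whose desirability classes have sizes (n_1, 1) — i.e., n_1 equivalent strong agents and one weakest agent — is weighted; in fact it equals the game with weighted representation [m_0; 1,…,1, 0] for some 1 ≤ m_0 ≤ n_1, i.e., S is winning iff S contains at least m_0 of the first n_1 agents. -/
open Finset

section

variable {n : ℕ} {W : Finset (Fin n) → Prop}

theorem win_of_card_le_of_desir (hW : Monotone W) {p : Fin n → Prop}
    (hp : ∀ i j, p i → p j → Desir W i j) {S T : Finset (Fin n)}
    (hST : ∀ x, ¬ p x → (x ∈ S ↔ x ∈ T)) (hcard : #S ≤ #T) (hS : W S) : W T := by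
  induction hd : #(S \ T) generalizing S with
  | zero => exact hW (sdiff_eq_empty_iff_subset.1 (card_eq_zero.1 hd)) hS
  | succ d ih =>
    obtain ⟨i, hi⟩ : (S \ T).Nonempty := card_pos.1 (by omega)
    obtain ⟨j, hj⟩ : (T \ S).Nonempty :=
      card_pos.1 (by have := card_sdiff_le_card_sdiff_iff.2 hcard; omega)
    rw [mem_sdiff] at hi hj
    have hpi : p i := by_contra fun h => hi.2 ((hST i h).1 hi.1)
    have hpj : p j := by_contra fun h => hj.2 ((hST j h).2 hj.1)
    refine ih (S := insert j (S.erase i)) ?_ ?_ (hp j i hpj hpi S hi.1 hj.2 hS) ?_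
    · intro x hx
      have : x ≠ i := fun h => hx (h ▸ hpi)
      have : x ≠ j := fun h => hx (h ▸ hpj)
      simp_all
    · rwa [card_insert_of_notMem (by simp [hj.2]), card_erase_add_one hi.1]
    · have : insert j (S.erase i) \ T = (S \ T).erase i := by
        ext x; by_cases x = j <;> simp_all [and_assoc]
      rw [this, card_erase_of_mem (mem_sdiff.2 hi), hd, Nat.add_sub_cancel]

theorem win_iff_le_card_erase (hW : Monotone W) (z : Fin n)
    (hP : ∀ i j, i ≠ z → j ≠ z → Desir W i j) {T : Finset (Fin n)} {a : Fin n}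
    (haT : a ∈ T) (hzT : z ∉ T) (hT : W T) (hL : ¬ W (insert z (T.erase a)))
    (S : Finset (Fin n)) : W S ↔ #T ≤ #(S.erase z) := by
  have hz : ∀ x, ¬ x ≠ z → x = z := fun x => not_not.1
  constructor
  · intro hS
    by_contra! hlt
    refine hL (win_of_card_le_of_desir hW hP ?_ ?_ (hW (insert_erase_subset z S) hS))
    · intro x hx; simp [hz x hx]
    · rw [card_insert_of_notMem (notMem_erase z S),
        card_insert_of_notMem (fun h => hzT (mem_of_mem_erase h)), card_erase_of_mem haT]
      omega
  · intro hle
    refine hW (erase_subset z S) (win_of_card_le_of_desir hW hP ?_ hle hT)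
    intro x hx; simp [hz x hx, hzT]

theorem isWeighted_of_iff_le_card_filter {p : Fin n → Prop} [DecidablePred p] {m : ℕ}
    (hm : 1 ≤ m) (hW : ∀ S, W S ↔ m ≤ #(S.filter p)) : IsWeighted W := by
  refine ⟨m, by exact_mod_cast hm, fun i => if p i then 1 else 0,
    fun i => by positivity, fun S => ?_⟩
  rw [hW, sum_boole, Nat.cast_le]

theorem Fin.filter_val_lt_eq_erase_last (S : Finset (Fin (n + 1))) :
    S.filter (fun i : Fin (n + 1) => (i : ℕ) < n) = S.erase (Fin.last n) := by
  ext i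
  simp [← Fin.lt_last_iff_ne_last, Fin.lt_def, and_comm]

end

theorem star_one_family_weighted_general (n₁ : ℕ) (hn : 1 ≤ n₁)
    (W : Finset (Fin (n₁ + 1)) → Prop) (hsg : SimpleGame (n₁ + 1) W)
    (hclass : ∀ i j : Fin (n₁ + 1), (Desir W i j ∧ Desir W j i) ↔
      (((i : ℕ) < n₁) ↔ ((j : ℕ) < n₁)))
    (hord : ∀ i : Fin (n₁ + 1), Desir W i (Fin.last n₁)) :
    IsWeighted W ∧
      ∃ m₀ : ℕ, 1 ≤ m₀ ∧ m₀ ≤ n₁ ∧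
        ∀ S : Finset (Fin (n₁ + 1)), W S ↔
          m₀ ≤ (S.filter (fun i : Fin (n₁ + 1) => (i : ℕ) < n₁)).card := by
  set z := Fin.last n₁
  set a : Fin (n₁ + 1) := ⟨0, by omega⟩
  have hmono : Monotone W := fun _ _ h => hsg.2.2 h
  have hstrong : ∀ i j, i ≠ z → j ≠ z → Desir W i j := fun i j hi hj =>
    ((hclass i j).2 (iff_of_true (Fin.val_lt_last hi) (Fin.val_lt_last hj))).1
  have hza : ¬ Desir W z a := fun h => by
    have := (hclass z a).1 ⟨h, hord a⟩
    simp [z, a] at this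
    omega
  obtain ⟨T, haT, hzT, hT, hL⟩ : ∃ T, a ∈ T ∧ z ∉ T ∧ W T ∧ ¬ W (insert z (T.erase a)) := by
    simpa [Desir] using hza
  have hchar : ∀ S, W S ↔ #T ≤ #(S.filter fun i : Fin (n₁ + 1) => (i : ℕ) < n₁) := fun S => by
    rw [Fin.filter_val_lt_eq_erase_last]
    exact win_iff_le_card_erase hmono z hstrong haT hzT hT hL S
  have hTpos : 1 ≤ #T := card_pos.2 ⟨a, haT⟩
  have hTle : #T ≤ n₁ := by simpa using card_lt_univ_of_notMem hzT
  exact ⟨isWeighted_of_iff_le_card_filter hTpos hchar, #T, hTpos, hTle, hchar⟩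

/-- Every complete simple game with type composition `(n₁, 1)` — the first `n₁`
agents forming the stronger class and the last agent the weakest singleton class —
is weighted; indeed it has the representation `[m₀; 1,…,1,0]`: `S` wins iff it
contains at least `m₀` of the first `n₁` agents, for some `1 ≤ m₀ ≤ n₁`. -/
theorem star_one_family_weighted (n₁ : ℕ) (hn : 1 ≤ n₁)
    (W : Finset (Fin (n₁ + 1)) → Prop) (hsg : SimpleGame (n₁ + 1) W)
    (hc : DesirTotalPreorder W)
    (hclass : ∀ i j : Fin (n₁ + 1), (Desir W i j ∧ Desir W j i) ↔
      (((i : ℕ) < n₁) ↔ ((j : ℕ) < n₁)))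
    (hord : ∀ i : Fin (n₁ + 1), Desir W i (Fin.last n₁)) :
    IsWeighted W ∧
      ∃ m₀ : ℕ, 1 ≤ m₀ ∧ m₀ ≤ n₁ ∧
        ∀ S : Finset (Fin (n₁ + 1)), W S ↔
          m₀ ≤ (S.filter (fun i : Fin (n₁ + 1) => (i : ℕ) < n₁)).card :=
  star_one_family_weighted_general n₁ hn W hsg hclass hord
end
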